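/- arXiv:1408.6204 — 5 statements merged into one kernel-verified Lean document; each statement's English description precedes it below -/
import Mathlib

section
/- Let ω = e^{iπ/4} and δ = 1+ω in Z[ω]. If u ∈ Z[ω] satisfies u ≡ 1 (mod δ), then u ≡ ω^m (mod δ³) for some m ∈ {0,1,2,3}. -/
noncomputable section
open Complex

def ω : ℂ := Complex.exp (Real.pi * Complex.I / 4)

def δ : ℂ := 1 + ω

def inZω (x : ℂ) : Prop := ∃ a b c d : ℤ, x = a * ω^3 + b * ω^2 + c * ω + d

def inD (x : ℂ) : Prop := ∃ a : ℤ, ∃ n : ℕ, x = a / 2^n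

def inDω (x : ℂ) : Prop :=
  ∃ a b c d : ℂ, inD a ∧ inD b ∧ inD c ∧ inD d ∧ x = a * ω^3 + b * ω^2 + c * ω + d

def dvdZ (a b : ℂ) : Prop := ∃ t : ℂ, inZω t ∧ b = a * t

theorem cong_one_mod_delta_implies_omega_pow (u : ℂ) (hu : inZω u)
    (h : dvdZ δ (u - 1)) :
    ∃ m : ℕ, m ≤ 3 ∧ dvdZ (δ^3) (u - ω^m) := by
  have hω4 : ω ^ 4 = -1 := by
    rw [ω, ← Complex.exp_nat_mul]
    have : (4 : ℕ) * (Real.pi * Complex.I / 4) = Real.pi * Complex.I := by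
      push_cast; ring
    rw [this, Complex.exp_pi_mul_I]
  obtain ⟨t, ⟨p, q, r, s, rfl⟩, hut⟩ := h
  rcases Int.even_or_odd' (p + r) with ⟨k, hk | hk⟩ <;>
    rcases Int.even_or_odd' (q + s) with ⟨l, hl | hl⟩
  · obtain rfl : r = 2*k - p := by omega
    obtain rfl : s = 2*l - q := by omega
    refine ⟨0, by norm_num, ((q + k - p - 2*l : ℤ) : ℂ) * ω^3 + ((l - q + p : ℤ) : ℂ) * ω^2 + ((q - k : ℤ) : ℂ) * ω + ((2*k - p - l : ℤ) : ℂ), ⟨_, _, _, _, rfl⟩, ?_⟩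
    simp only [δ] at hut ⊢
    linear_combination (norm := (push_cast; ring)) hut + ((3*((l:ℂ)) - 2*((k:ℂ)) - ((q:ℂ)) + ((p:ℂ))) + (5*((l:ℂ)) - 3*((k:ℂ)) - 2*((q:ℂ)) + 2*((p:ℂ)))*ω + (2*((l:ℂ)) - ((k:ℂ)) - ((q:ℂ)) + ((p:ℂ)))*ω^2) * hω4
  · obtain rfl : r = 2*k - p := by omega
    obtain rfl : s = 2*l + 1 - q := by omega
    refine ⟨1, by norm_num, ((q + k - p - 2*l - 1 : ℤ) : ℂ) * ω^3 + ((l - q + p - 1 : ℤ) : ℂ) * ω^2 + ((q + 2 - k : ℤ) : ℂ) * ω + ((2*k - p - l - 2 : ℤ) : ℂ), ⟨_, _, _, _, rfl⟩, ?_⟩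
    simp only [δ] at hut ⊢
    linear_combination (norm := (push_cast; ring)) hut + ((4 + 3*((l:ℂ)) - 2*((k:ℂ)) - ((q:ℂ)) + ((p:ℂ))) + (4 + 5*((l:ℂ)) - 3*((k:ℂ)) - 2*((q:ℂ)) + 2*((p:ℂ)))*ω + (1 + 2*((l:ℂ)) - ((k:ℂ)) - ((q:ℂ)) + ((p:ℂ)))*ω^2) * hω4
  · obtain rfl : r = 2*k + 1 - p := by omega
    obtain rfl : s = 2*l - q := by omega
    refine ⟨3, by norm_num, ((q + k + 1 - p - 2*l : ℤ) : ℂ) * ω^3 + ((l - q + p - 1 : ℤ) : ℂ) * ω^2 + ((q - k : ℤ) : ℂ) * ω + ((2*k + 1 - p - l : ℤ) : ℂ), ⟨_, _, _, _, rfl⟩, ?_⟩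
    simp only [δ] at hut ⊢
    linear_combination (norm := (push_cast; ring)) hut + ((3*((l:ℂ)) - 2*((k:ℂ)) - ((q:ℂ)) + ((p:ℂ))) + (-2 + 5*((l:ℂ)) - 3*((k:ℂ)) - 2*((q:ℂ)) + 2*((p:ℂ)))*ω + (-1 + 2*((l:ℂ)) - ((k:ℂ)) - ((q:ℂ)) + ((p:ℂ)))*ω^2) * hω4
  · obtain rfl : r = 2*k + 1 - p := by omega
    obtain rfl : s = 2*l + 1 - q := by omega
    refine ⟨2, by norm_num, ((q + k - p - 2*l - 2 : ℤ) : ℂ) * ω^3 + ((l + 1 - q + p : ℤ) : ℂ) * ω^2 + ((q - k : ℤ) : ℂ) * ω + ((2*k - p - l - 1 : ℤ) : ℂ), ⟨_, _, _, _, rfl⟩, ?_⟩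
    simp only [δ] at hut ⊢
    linear_combination (norm := (push_cast; ring)) hut + ((3 + 3*((l:ℂ)) - 2*((k:ℂ)) - ((q:ℂ)) + ((p:ℂ))) + (5 + 5*((l:ℂ)) - 3*((k:ℂ)) - 2*((q:ℂ)) + 2*((p:ℂ)))*ω + (2 + 2*((l:ℂ)) - ((k:ℂ)) - ((q:ℂ)) + ((p:ℂ)))*ω^2) * hω4
end
end

section
/- The quotient ring Z[ω]/(δ³), where ω = e^{iπ/4} and δ = 1+ω, has exactly 8 elements, represented by 1, ω, ω², ω³, 0, 1+ω, 1+ω², 1+ω³. -/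
noncomputable section
open Complex

/-
Write elements of ℤ[ω] as `a ω³ + b ω² + c ω + d`; the coefficients are unique because the real
and imaginary parts are `d + (c - a) √2/2` and `b + (c + a) √2/2`, and `√2` is irrational.
Since `ω⁴ = -1`, multiplication by `δ³` acts on coefficient vectors by an integer matrix of
determinant `8 = N(δ)³`, and its image is exactly the index-8 lattice on which `a + b`, `a + c` and
`a + b + c + d` are even. Hence the class of an element modulo `δ³` is its vector of these three
parities in `(ZMod 2)³`, and the eight listed representatives realize each vector exactly once.
-/

theorem Irrational.eq_of_intCast_add_intCast_mul_eq {x : ℝ} (hx : Irrational x) {m n m' n' : ℤ}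
    (h : m + n * x = m' + n' * x) : m = m' ∧ n = n' := by
  obtain rfl : n = n' := by
    by_contra hne
    apply (hx.intCast_mul (sub_ne_zero.2 hne)).ne_int (m' - m)
    push_cast
    linarith
  exact ⟨by exact_mod_cast (by linarith : (m : ℝ) = m'), rfl⟩

lemma ω_sq : ω ^ 2 = I := by
  rw [ω, ← Complex.exp_nat_mul]
  convert Complex.exp_pi_div_two_mul_I using 2
  push_cast
  ring

lemma ω_pow_four : ω ^ 4 = -1 := by
  rw [show ω ^ 4 = (ω ^ 2) ^ 2 by ring, ω_sq, I_sq]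

lemma ω_eq : ω = (√2 / 2 : ℝ) * (1 + I) := by
  rw [ω, show (Real.pi : ℂ) * I / 4 = (Real.pi / 4 : ℝ) * I by push_cast; ring,
    exp_mul_I, ← ofReal_cos, ← ofReal_sin, Real.cos_pi_div_four, Real.sin_pi_div_four]
  ring

def ofCoeffs : ℤ × ℤ × ℤ × ℤ → ℂ
  | (a, b, c, d) => a * ω ^ 3 + b * ω ^ 2 + c * ω + d

lemma ofCoeffs_eq_mk (a b c d : ℤ) :
    ofCoeffs (a, b, c, d) = ⟨d + (c - a) * (√2 / 2), b + (c + a) * (√2 / 2)⟩ := by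
  rw [mk_eq_add_mul_I, ofCoeffs, pow_succ, ω_sq, ω_eq]
  push_cast
  linear_combination (a * √2 / 2 : ℂ) * I_sq

lemma ofCoeffs_injective : Function.Injective ofCoeffs := by
  rintro ⟨a, b, c, d⟩ ⟨a', b', c', d'⟩ h
  rw [ofCoeffs_eq_mk, ofCoeffs_eq_mk, Complex.mk.injEq] at h
  have hs : Irrational (√2 / 2) := by simpa using irrational_sqrt_two.div_natCast two_ne_zero
  obtain ⟨hd, hca⟩ : d = d' ∧ c - a = c' - a' :=
    hs.eq_of_intCast_add_intCast_mul_eq (by push_cast; exact h.1)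
  obtain ⟨hb, hac⟩ : b = b' ∧ c + a = c' + a' :=
    hs.eq_of_intCast_add_intCast_mul_eq (by push_cast; exact h.2)
  simp only [Prod.mk.injEq]
  omega

lemma δ_cube_mul_ofCoeffs (p q u v : ℤ) :
    δ ^ 3 * ofCoeffs (p, q, u, v) = ofCoeffs (p + 3 * q + 3 * u + v, -p + q + 3 * u + 3 * v,
      -3 * p - q + u + 3 * v, -3 * p - 3 * q - u + v) := by
  simp only [ofCoeffs, δ]
  push_cast
  linear_combination (p * ω ^ 2 + (3 * p + q) * ω + (3 * p + 3 * q + u)) * ω_pow_four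

def residueModδCube : ℤ × ℤ × ℤ × ℤ → ZMod 2 × ZMod 2 × ZMod 2
  | (a, b, c, d) => ((a + b : ℤ), (a + c : ℤ), (a + b + c + d : ℤ))

lemma residueModδCube_eq_zero_iff (a b c d : ℤ) :
    residueModδCube (a, b, c, d) = 0 ↔ Even (a + b) ∧ Even (a + c) ∧ Even (a + b + c + d) := by
  simp only [residueModδCube, Prod.mk_eq_zero, ZMod.intCast_eq_zero_iff_even]

lemma dvdZ_δ_cube_iff (v : ℤ × ℤ × ℤ × ℤ) :
    dvdZ (δ ^ 3) (ofCoeffs v) ↔ residueModδCube v = 0 := by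
  obtain ⟨a, b, c, d⟩ := v
  rw [residueModδCube_eq_zero_iff]
  constructor
  · rintro ⟨_, ⟨p, q, u, w, rfl⟩, h⟩
    have h := ofCoeffs_injective (h.trans (δ_cube_mul_ofCoeffs p q u w))
    simp only [Prod.mk.injEq] at h
    obtain ⟨rfl, rfl, rfl, rfl⟩ := h
    exact ⟨⟨2 * q + 3 * u + 2 * w, by ring⟩, ⟨-p + q + 2 * u + 2 * w, by ring⟩,
      ⟨-3 * p + 3 * u + 4 * w, by ring⟩⟩
  · rintro ⟨⟨k, hk⟩, ⟨l, hl⟩, ⟨m, hm⟩⟩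
    -- the inverse of the matrix of `δ_cube_mul_ofCoeffs`, with b, c, d eliminated via k, l, m
    refine ⟨ofCoeffs (-2 * a + 3 * k - m, -k + 3 * l - m, 2 * a - k - 4 * l + 2 * m,
      -3 * a + 3 * k + 3 * l - 2 * m), ⟨_, _, _, _, rfl⟩, ?_⟩
    rw [δ_cube_mul_ofCoeffs]
    congr 1
    simp only [Prod.mk.injEq]
    omega

lemma ofCoeffs_sub (v w : ℤ × ℤ × ℤ × ℤ) : ofCoeffs (v - w) = ofCoeffs v - ofCoeffs w := by
  obtain ⟨a, b, c, d⟩ := v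
  obtain ⟨a', b', c', d'⟩ := w
  simp only [Prod.mk_sub_mk, ofCoeffs]
  push_cast
  ring

lemma residueModδCube_sub (v w : ℤ × ℤ × ℤ × ℤ) :
    residueModδCube (v - w) = residueModδCube v - residueModδCube w := by
  obtain ⟨a, b, c, d⟩ := v
  obtain ⟨a', b', c', d'⟩ := w
  simp only [Prod.mk_sub_mk, residueModδCube, Prod.mk.injEq]
  push_cast
  refine ⟨?_, ?_, ?_⟩ <;> ring

lemma dvdZ_δ_cube_sub_iff (v w : ℤ × ℤ × ℤ × ℤ) :
    dvdZ (δ ^ 3) (ofCoeffs v - ofCoeffs w) ↔ residueModδCube v = residueModδCube w := by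
  rw [← ofCoeffs_sub, dvdZ_δ_cube_iff, residueModδCube_sub, sub_eq_zero]

def reprCoeffs : List (ℤ × ℤ × ℤ × ℤ) :=
  [(0, 0, 0, 1), (0, 0, 1, 0), (0, 1, 0, 0), (1, 0, 0, 0),
    (0, 0, 0, 0), (0, 0, 1, 1), (0, 1, 0, 1), (1, 0, 0, 1)]

lemma map_ofCoeffs_reprCoeffs : reprCoeffs.map ofCoeffs =
    [1, ω, ω^2, ω^3, 0, 1 + ω, 1 + ω^2, 1 + ω^3] := by
  simp [reprCoeffs, ofCoeffs, add_comm]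

lemma exists_mem_reprCoeffs_residueModδCube_eq (r : ZMod 2 × ZMod 2 × ZMod 2) :
    ∃ v ∈ reprCoeffs, residueModδCube v = r := by
  revert r
  decide

lemma reprCoeffs_pairwise_residueModδCube_ne :
    reprCoeffs.Pairwise (fun v w => residueModδCube v ≠ residueModδCube w) := by
  decide

theorem quotient_delta_cubed_eight_elements :
    (∀ x : ℂ, inZω x →
      ∃ r ∈ ([1, ω, ω^2, ω^3, 0, 1 + ω, 1 + ω^2, 1 + ω^3] : List ℂ),
        dvdZ (δ^3) (x - r)) ∧
    ([1, ω, ω^2, ω^3, 0, 1 + ω, 1 + ω^2, 1 + ω^3] : List ℂ).Pairwise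
      (fun r s => ¬ dvdZ (δ^3) (s - r)) := by
  rw [← map_ofCoeffs_reprCoeffs]
  constructor
  · rintro x ⟨a, b, c, d, rfl⟩
    obtain ⟨v, hv, hres⟩ :=
      exists_mem_reprCoeffs_residueModδCube_eq (residueModδCube (a, b, c, d))
    exact ⟨ofCoeffs v, List.mem_map_of_mem hv, (dvdZ_δ_cube_sub_iff (a, b, c, d) v).2 hres.symm⟩
  · rw [List.pairwise_map]
    exact reprCoeffs_pairwise_residueModδCube_ne.imp fun hne hdvd =>
      hne ((dvdZ_δ_cube_sub_iff _ _).1 hdvd).symm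
end
end

section
/- Let ω = e^{iπ/4}, δ = 1+ω, and let u₁, u₂ ∈ Z[ω] with u₁ ≡ u₂ ≡ 1 (mod δ). Then there exists j ∈ {0,1,2,3} such that both (ωʲu₁ + u₂)/√2 and (ωʲu₁ − u₂)/√2 are elements of Z[ω] divisible by δ. -/
noncomputable section
open Complex

/-- integer-coordinate elements of Z[ω] -/
def tc (a b c d : ℤ) : ℂ := (a : ℂ) * ω^3 + (b : ℂ) * ω^2 + (c : ℂ) * ω + (d : ℂ)

lemma hω4 : ω^4 = -1 := by
  have h : ω * ω * (ω * ω) = -1 := by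
    rw [ω, ← Complex.exp_add, ← Complex.exp_add,
      show ((Real.pi : ℂ) * Complex.I / 4 + (Real.pi : ℂ) * Complex.I / 4 +
        ((Real.pi : ℂ) * Complex.I / 4 + (Real.pi : ℂ) * Complex.I / 4)) =
        (Real.pi : ℂ) * Complex.I by ring]
    exact Complex.exp_pi_mul_I
  linear_combination h

lemma hωne : ω - ω^3 ≠ 0 := by
  intro h
  have hω0 : ω ≠ 0 := by rw [ω]; exact Complex.exp_ne_zero _
  have h2 : ω ^ 2 = 1 := by
    have hm : ω * (1 - ω^2) = 0 := by linear_combination h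
    rcases mul_eq_zero.mp hm with h' | h'
    · exact absurd h' hω0
    · linear_combination -h'
  have : (1 : ℂ) = -1 := by
    calc (1:ℂ) = (ω^2)^2 := by rw [h2]; ring
    _ = ω^4 := by ring
    _ = -1 := hω4
  norm_num at this

lemma delta_mul (a b c d : ℤ) :
    δ * tc a b c d = tc (a + b) (b + c) (c + d) (d - a) := by
  simp only [tc, δ]; push_cast; linear_combination (a : ℂ) * hω4

lemma div_delta (x3 x2 x1 x0 : ℤ) (h : 2 ∣ (x3 - x2 + x1 - x0)) :
    ∃ a b c d : ℤ, x3 = a + b ∧ x2 = b + c ∧ x1 = c + d ∧ x0 = d - a ∧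
      tc x3 x2 x1 x0 = δ * tc a b c d := by
  obtain ⟨k, hk⟩ := h
  refine ⟨k, x3 - k, x2 - x3 + k, x1 - x2 + x3 - k, by omega, by omega, by omega, by omega, ?_⟩
  rw [delta_mul, show k + (x3 - k) = x3 by ring, show (x3 - k) + (x2 - x3 + k) = x2 by ring,
    show (x2 - x3 + k) + (x1 - x2 + x3 - k) = x1 by ring,
    show (x1 - x2 + x3 - k) - k = x0 by omega]

lemma div_delta3 (x3 x2 x1 x0 : ℤ) (h0 : 2 ∣ x3 + x2 + x1 + x0) (h1 : 2 ∣ x3 + x1)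
    (h2 : 2 ∣ x3 + x2) :
    ∃ a b c d : ℤ, tc x3 x2 x1 x0 = δ^3 * tc a b c d := by
  obtain ⟨a, b, c, d, e3, e2, e1, e0, hx⟩ := div_delta x3 x2 x1 x0 (by omega)
  obtain ⟨a', b', c', d', f3, f2, f1, f0, hy⟩ := div_delta a b c d (by omega)
  obtain ⟨a'', b'', c'', d'', g3, g2, g1, g0, hz⟩ := div_delta a' b' c' d' (by omega)
  exact ⟨a'', b'', c'', d'', by rw [hx, hy, hz]; ring⟩

lemma key (x3 x2 x1 x0 : ℤ) (h0 : 2 ∣ x3 + x2 + x1 + x0) (h1 : 2 ∣ x3 + x1)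
    (h2 : 2 ∣ x3 + x2) :
    inZω (tc x3 x2 x1 x0 / (ω - ω^3)) ∧ dvdZ δ (tc x3 x2 x1 x0 / (ω - ω^3)) := by
  obtain ⟨a, b, c, d, h⟩ := div_delta3 x3 x2 x1 x0 h0 h1 h2
  have hq : tc x3 x2 x1 x0 / (ω - ω^3)
      = δ * tc (a + b + c) (b + c + d) (-a + c + d) (-a - b + d) := by
    rw [div_eq_iff hωne, h]
    simp only [tc, δ]; push_cast
    linear_combination ((d : ℂ) + (a + b + c + 2*d) * ω + (2*a + 2*b + 2*c + d) * ω^2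
      + (a + b + c) * ω^3) * hω4
  constructor
  · show ∃ a b c d : ℤ, _ = (a : ℂ) * ω^3 + b * ω^2 + c * ω + d
    refine ⟨a + b + c + (b + c + d), b + c + d + (-a + c + d),
      -a + c + d + (-a - b + d), -a - b + d - (a + b + c), ?_⟩
    rw [hq, delta_mul]; simp only [tc]; try (push_cast; ring)
  · refine ⟨tc (a + b + c) (b + c + d) (-a + c + d) (-a - b + d), ?_, hq⟩
    exact ⟨a + b + c, b + c + d, -a + c + d, -a - b + d, rfl⟩

lemma omega1_mul (a b c d : ℤ) : ω * tc a b c d = tc b c d (-a) := by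
  simp only [tc]; push_cast; linear_combination (a : ℂ) * hω4

lemma omega2_mul (a b c d : ℤ) : ω^2 * tc a b c d = tc c d (-a) (-b) := by
  simp only [tc]; push_cast; linear_combination ((a : ℂ) * ω + b) * hω4

lemma omega3_mul (a b c d : ℤ) : ω^3 * tc a b c d = tc d (-a) (-b) (-c) := by
  simp only [tc]; push_cast; linear_combination ((a : ℂ) * ω^2 + (b : ℂ) * ω + c) * hω4

lemma tc_add (a b c d p q r s : ℤ) :
    tc a b c d + tc p q r s = tc (a + p) (b + q) (c + r) (d + s) := by
  simp only [tc]; push_cast; ring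

lemma tc_sub (a b c d p q r s : ℤ) :
    tc a b c d - tc p q r s = tc (a - p) (b - q) (c - r) (d - s) := by
  simp only [tc]; push_cast; ring

theorem row_reduction_lemma (u₁ u₂ : ℂ) (h₁ : inZω u₁) (h₂ : inZω u₂)
    (hc₁ : dvdZ δ (u₁ - 1)) (hc₂ : dvdZ δ (u₂ - 1)) :
    ∃ j : ℕ, j ≤ 3 ∧
      inZω ((ω^j * u₁ + u₂) / (ω - ω^3)) ∧ dvdZ δ ((ω^j * u₁ + u₂) / (ω - ω^3)) ∧
      inZω ((ω^j * u₁ - u₂) / (ω - ω^3)) ∧ dvdZ δ ((ω^j * u₁ - u₂) / (ω - ω^3)) := by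
  obtain ⟨t₁, ⟨a, b, c, d, ht₁⟩, hu₁⟩ := hc₁
  obtain ⟨t₂, ⟨p, q, r, s, ht₂⟩, hu₂⟩ := hc₂
  have hU₁ : u₁ = tc (a + b) (b + c) (c + d) (d - a + 1) := by
    have : u₁ = δ * tc a b c d + 1 := by
      rw [show tc a b c d = t₁ from ht₁.symm]; linear_combination hu₁
    rw [this, delta_mul]; simp only [tc]; push_cast; ring
  have hU₂ : u₂ = tc (p + q) (q + r) (r + s) (s - p + 1) := by
    have : u₂ = δ * tc p q r s + 1 := by
      rw [show tc p q r s = t₂ from ht₂.symm]; linear_combination hu₂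
    rw [this, delta_mul]; simp only [tc]; push_cast; ring
  rcases Int.even_or_odd ((a + b + c + d) + (p + q + r + s)) with ⟨k, hk⟩ | ⟨k, hk⟩
  · rcases Int.even_or_odd ((a + c) + (p + r)) with ⟨l, hl⟩ | ⟨l, hl⟩
    · -- j = 0
      refine ⟨0, by norm_num, ?_, ?_, ?_, ?_⟩ <;>
        rw [show (ω^0 : ℂ) = 1 by norm_num, one_mul, hU₁, hU₂] <;>
        first
        | (rw [tc_add]; exact (key _ _ _ _ (by omega) (by omega) (by omega)).1)
        | (rw [tc_add]; exact (key _ _ _ _ (by omega) (by omega) (by omega)).2)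
        | (rw [tc_sub]; exact (key _ _ _ _ (by omega) (by omega) (by omega)).1)
        | (rw [tc_sub]; exact (key _ _ _ _ (by omega) (by omega) (by omega)).2)
    · -- j = 2
      refine ⟨2, by norm_num, ?_, ?_, ?_, ?_⟩ <;>
        rw [hU₁, hU₂, omega2_mul] <;>
        first
        | (rw [tc_add]; exact (key _ _ _ _ (by omega) (by omega) (by omega)).1)
        | (rw [tc_add]; exact (key _ _ _ _ (by omega) (by omega) (by omega)).2)
        | (rw [tc_sub]; exact (key _ _ _ _ (by omega) (by omega) (by omega)).1)
        | (rw [tc_sub]; exact (key _ _ _ _ (by omega) (by omega) (by omega)).2)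
  · rcases Int.even_or_odd ((a + b + c + d) + (a + c) + (p + r)) with ⟨l, hl⟩ | ⟨l, hl⟩
    · -- j = 1
      refine ⟨1, by norm_num, ?_, ?_, ?_, ?_⟩ <;>
        rw [hU₁, hU₂, pow_one, omega1_mul] <;>
        first
        | (rw [tc_add]; exact (key _ _ _ _ (by omega) (by omega) (by omega)).1)
        | (rw [tc_add]; exact (key _ _ _ _ (by omega) (by omega) (by omega)).2)
        | (rw [tc_sub]; exact (key _ _ _ _ (by omega) (by omega) (by omega)).1)
        | (rw [tc_sub]; exact (key _ _ _ _ (by omega) (by omega) (by omega)).2)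
    · -- j = 3
      refine ⟨3, by norm_num, ?_, ?_, ?_, ?_⟩ <;>
        rw [hU₁, hU₂, omega3_mul] <;>
        first
        | (rw [tc_add]; exact (key _ _ _ _ (by omega) (by omega) (by omega)).1)
        | (rw [tc_add]; exact (key _ _ _ _ (by omega) (by omega) (by omega)).2)
        | (rw [tc_sub]; exact (key _ _ _ _ (by omega) (by omega) (by omega)).1)
        | (rw [tc_sub]; exact (key _ _ _ _ (by omega) (by omega) (by omega)).2)
end
end

section
/- Let v ∈ Z[ω]ⁿ be a vector with entries in Z[ω] (ω = e^{iπ/4}) satisfying v†v = 1. Then v has exactly one nonzero entry, and that entry equals ω^ℓ for some ℓ ∈ {0,...,7}. -/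
noncomputable section
open Complex

lemma hωval : ω = ((Real.sqrt 2 / 2 : ℝ) : ℂ) * (1 + I) := by
  rw [ω, show (↑Real.pi * Complex.I / 4) = ((Real.pi/4 : ℝ):ℂ) * I by push_cast; ring,
    Complex.exp_mul_I, ← Complex.ofReal_cos, ← Complex.ofReal_sin,
    Real.cos_pi_div_four, Real.sin_pi_div_four]
  push_cast
  ring


lemma ωne : ω ≠ 0 := Complex.exp_ne_zero _

lemma hconj : (starRingEnd ℂ) ω = -ω^3 := by
  have h1 : (starRingEnd ℂ) ω = ω⁻¹ := by
    rw [ω, ← Complex.exp_conj, ← Complex.exp_neg]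
    congr 1
    rw [map_div₀]
    simp [Complex.conj_I, Complex.conj_ofReal, map_ofNat]
    ring
  have h2 : -ω^3 * ω = 1 := by linear_combination -hω4
  rw [h1, ← eq_inv_of_mul_eq_one_left h2]

lemma hsqrt2 : ω - ω^3 = ((Real.sqrt 2 : ℝ) : ℂ) := by
  have h : ω - ω^3 = ω + (starRingEnd ℂ) ω := by rw [hconj]; ring
  rw [h, Complex.add_conj]
  have : ω.re = Real.sqrt 2 / 2 := by rw [hωval]; simp
  rw [this]; push_cast; ring

lemma entry_norm (a b c d : ℤ) :
    (starRingEnd ℂ) ((a:ℂ) * ω^3 + b * ω^2 + c * ω + d) * ((a:ℂ) * ω^3 + b * ω^2 + c * ω + d)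
      = ((a^2+b^2+c^2+d^2 : ℤ) : ℂ) + ((a*b+b*c+c*d-d*a : ℤ) : ℂ) * (ω - ω^3) := by
  simp only [map_add, map_mul, map_pow, map_intCast, hconj]
  push_cast
  linear_combination (-(a:ℂ)^2*ω^8 - (a:ℂ)*b*ω^7 - (a:ℂ)*c*ω^6 + ((a:ℂ)*b - (a:ℂ)*d)*ω^5
    + ((a:ℂ)^2 + (b:ℂ)^2)*ω^4 + ((a:ℂ)*b + (b:ℂ)*c)*ω^3 + (b:ℂ)*d*ω^2
    + ((a:ℂ)*d - (a:ℂ)*b - (b:ℂ)*c)*ω - ((a:ℂ)^2+(b:ℂ)^2+(c:ℂ)^2)) * hω4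

lemma sq_one_cases (a b c d : ℤ) (h : a^2+b^2+c^2+d^2 = 1) :
    ∃ ℓ : ℕ, ℓ ≤ 7 ∧ (a:ℂ) * ω^3 + b * ω^2 + c * ω + d = ω^ℓ := by
  have ha1 : -1 ≤ a := by nlinarith [sq_nonneg (a+1), sq_nonneg b, sq_nonneg c, sq_nonneg d]
  have ha2 : a ≤ 1 := by nlinarith [sq_nonneg (a-1), sq_nonneg b, sq_nonneg c, sq_nonneg d]
  have hb1 : -1 ≤ b := by nlinarith [sq_nonneg (b+1), sq_nonneg a, sq_nonneg c, sq_nonneg d]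
  have hb2 : b ≤ 1 := by nlinarith [sq_nonneg (b-1), sq_nonneg a, sq_nonneg c, sq_nonneg d]
  have hc1 : -1 ≤ c := by nlinarith [sq_nonneg (c+1), sq_nonneg a, sq_nonneg b, sq_nonneg d]
  have hc2 : c ≤ 1 := by nlinarith [sq_nonneg (c-1), sq_nonneg a, sq_nonneg b, sq_nonneg d]
  have hd1 : -1 ≤ d := by nlinarith [sq_nonneg (d+1), sq_nonneg a, sq_nonneg b, sq_nonneg c]
  have hd2 : d ≤ 1 := by nlinarith [sq_nonneg (d-1), sq_nonneg a, sq_nonneg b, sq_nonneg c]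
  have h8 : (a=0∧b=0∧c=0∧d=1) ∨ (a=0∧b=0∧c=1∧d=0) ∨ (a=0∧b=1∧c=0∧d=0) ∨ (a=1∧b=0∧c=0∧d=0)
      ∨ (a=0∧b=0∧c=0∧d=-1) ∨ (a=0∧b=0∧c=-1∧d=0) ∨ (a=0∧b=-1∧c=0∧d=0) ∨ (a=-1∧b=0∧c=0∧d=0) := by
    interval_cases a <;> interval_cases b <;> interval_cases c <;> interval_cases d <;> omega
  rcases h8 with ⟨h1,h2,h3,h4⟩|⟨h1,h2,h3,h4⟩|⟨h1,h2,h3,h4⟩|⟨h1,h2,h3,h4⟩|⟨h1,h2,h3,h4⟩|⟨h1,h2,h3,h4⟩|⟨h1,h2,h3,h4⟩|⟨h1,h2,h3,h4⟩ <;>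
    subst h1 <;> subst h2 <;> subst h3 <;> subst h4 <;> push_cast
  · exact ⟨0, by norm_num, by ring⟩
  · exact ⟨1, by norm_num, by ring⟩
  · exact ⟨2, by norm_num, by ring⟩
  · exact ⟨3, by norm_num, by ring⟩
  · exact ⟨4, by norm_num, by linear_combination -hω4⟩
  · exact ⟨5, by norm_num, by linear_combination -ω*hω4⟩
  · exact ⟨6, by norm_num, by linear_combination -ω^2*hω4⟩
  · exact ⟨7, by norm_num, by linear_combination -ω^3*hω4⟩

theorem unit_vector_single_entry (n : ℕ) (v : Fin n → ℂ)
    (hZ : ∀ i, inZω (v i))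
    (hunit : (∑ i, (starRingEnd ℂ) (v i) * v i) = 1) :
    ∃ i : Fin n, ∃ ℓ : ℕ, ℓ ≤ 7 ∧ v i = ω^ℓ ∧ ∀ j, j ≠ i → v j = 0 := by
  choose a b c d hv using hZ
  set N : Fin n → ℤ := fun i => (a i)^2+(b i)^2+(c i)^2+(d i)^2 with hNdef
  set M : Fin n → ℤ := fun i => a i * b i + b i * c i + c i * d i - d i * a i with hMdef
  have hkey : ∀ i, (starRingEnd ℂ) (v i) * v i = ((N i : ℤ) : ℂ) + ((M i : ℤ) : ℂ) * (ω - ω^3) := by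
    intro i
    rw [hv i]
    exact entry_norm (a i) (b i) (c i) (d i)
  have hsum : ((∑ i, N i : ℤ) : ℂ) + ((∑ i, M i : ℤ) : ℂ) * (ω - ω^3) = 1 := by
    push_cast
    rw [Finset.sum_mul, ← Finset.sum_add_distrib, ← hunit]
    exact Finset.sum_congr rfl fun i _ => (hkey i).symm
  rw [hsqrt2] at hsum
  have hreal : ((∑ i, N i : ℤ) : ℝ) + ((∑ i, M i : ℤ) : ℝ) * Real.sqrt 2 = 1 := by
    have := hsum
    rw [show (1:ℂ) = ((1:ℝ):ℂ) by norm_num] at this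
    exact_mod_cast this
  set P : ℤ := ∑ i, N i
  set Q : ℤ := ∑ i, M i
  have hQ : Q = 0 := by
    by_contra hQ
    apply irrational_sqrt_two
    refine ⟨((1 - P : ℤ) : ℚ) / (Q : ℚ), ?_⟩
    have hQR : (Q:ℝ) ≠ 0 := Int.cast_ne_zero.mpr hQ
    push_cast
    field_simp
    linarith
  have hP : P = 1 := by
    rw [hQ] at hreal
    push_cast at hreal
    have : (P:ℝ) = 1 := by linarith
    exact_mod_cast this
  have hNpos : ∀ i, 0 ≤ N i := fun i => by simp only [hNdef]; positivity
  -- find the unique index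
  have hex : ∃ i, N i ≠ 0 := by
    by_contra h
    push_neg at h
    have : P = 0 := Finset.sum_eq_zero fun i _ => h i
    omega
  obtain ⟨i, hi⟩ := hex
  have hle : N i ≤ P := Finset.single_le_sum (fun j _ => hNpos j) (Finset.mem_univ i)
  have hNi : N i = 1 := by have := hNpos i; omega
  have hrest : ∀ j, j ≠ i → N j = 0 := by
    intro j hj
    have hsplit : N i + ∑ k ∈ Finset.univ.erase i, N k = P :=
      Finset.add_sum_erase _ _ (Finset.mem_univ i)
    have h0 : ∑ k ∈ Finset.univ.erase i, N k = 0 := by omega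
    have := (Finset.sum_eq_zero_iff_of_nonneg (fun k _ => hNpos k)).mp h0 j
      (Finset.mem_erase.mpr ⟨hj, Finset.mem_univ j⟩)
    exact this
  obtain ⟨ℓ, hℓ, hval⟩ := sq_one_cases (a i) (b i) (c i) (d i) hNi
  refine ⟨i, ℓ, hℓ, by rw [hv i]; exact hval, ?_⟩
  intro j hj
  have h0 : (a j)^2 + (b j)^2 + (c j)^2 + (d j)^2 = 0 := by
    have := hrest j hj
    simpa [hNdef] using this
  have ha : a j = 0 := pow_eq_zero_iff (two_ne_zero) |>.mp
    (le_antisymm (by nlinarith [sq_nonneg (b j), sq_nonneg (c j), sq_nonneg (d j)]) (sq_nonneg _))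
  have hb : b j = 0 := pow_eq_zero_iff (two_ne_zero) |>.mp
    (le_antisymm (by nlinarith [sq_nonneg (a j), sq_nonneg (c j), sq_nonneg (d j)]) (sq_nonneg _))
  have hc : c j = 0 := pow_eq_zero_iff (two_ne_zero) |>.mp
    (le_antisymm (by nlinarith [sq_nonneg (a j), sq_nonneg (b j), sq_nonneg (d j)]) (sq_nonneg _))
  have hd : d j = 0 := pow_eq_zero_iff (two_ne_zero) |>.mp
    (le_antisymm (by nlinarith [sq_nonneg (a j), sq_nonneg (b j), sq_nonneg (c j)]) (sq_nonneg _))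
  rw [hv j, ha, hb, hc, hd]
  norm_num
end
end

section
/- Let ω = e^{iπ/4}, δ = 1+ω, and let x, y, z, w ∈ Z[ω] satisfy x ≡ 0, y ≡ 1, z ≡ δ, w ≡ δ+1 (all mod δ²). Then x̄x + ȳy + z̄z + w̄w ≡ √2 (mod 2) in Z[ω]. -/
noncomputable section
open Complex
set_option maxHeartbeats 4000000

theorem four_residues_norm_sum (x y z w : ℂ)
    (hx : inZω x) (hy : inZω y) (hz : inZω z) (hw : inZω w)
    (hcx : dvdZ (δ^2) (x - 0)) (hcy : dvdZ (δ^2) (y - 1))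
    (hcz : dvdZ (δ^2) (z - δ)) (hcw : dvdZ (δ^2) (w - (δ + 1))) :
    dvdZ 2 ((starRingEnd ℂ) x * x + (starRingEnd ℂ) y * y +
        (starRingEnd ℂ) z * z + (starRingEnd ℂ) w * w - (ω - ω^3)) := by
  obtain ⟨t1, ⟨a1, b1, c1, d1, ht1⟩, hx1⟩ := hcx
  obtain ⟨t2, ⟨a2, b2, c2, d2, ht2⟩, hy1⟩ := hcy
  obtain ⟨t3, ⟨a3, b3, c3, d3, ht3⟩, hz1⟩ := hcz
  obtain ⟨t4, ⟨a4, b4, c4, d4, ht4⟩, hw1⟩ := hcw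
  have hδ : δ = 1 + ω := rfl
  rw [hδ] at hx1 hy1 hz1 hw1
  have eX : x = (1+ω)^2 * ((a1:ℂ)*ω^3 + b1*ω^2 + c1*ω + d1) := by
    linear_combination hx1 + (1+ω)^2 * ht1
  have eY : y = (1+ω)^2 * ((a2:ℂ)*ω^3 + b2*ω^2 + c2*ω + d2) + 1 := by
    linear_combination hy1 + (1+ω)^2 * ht2
  have eZ : z = (1+ω)^2 * ((a3:ℂ)*ω^3 + b3*ω^2 + c3*ω + d3) + (1+ω) := by
    linear_combination hz1 + (1+ω)^2 * ht3
  have eW : w = (1+ω)^2 * ((a4:ℂ)*ω^3 + b4*ω^2 + c4*ω + d4) + (1+ω) + 1 := by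
    linear_combination hw1 + (1+ω)^2 * ht4
  have eXc : (starRingEnd ℂ) x = (1-ω^3)^2 * (-(a1:ℂ)*ω - b1*ω^2 - c1*ω^3 + d1) := by
    rw [eX]
    simp only [map_mul, map_pow, map_add, map_one, map_intCast, map_neg, hconj]
    linear_combination ((1-ω^3)^2 * (-(a1:ℂ)*ω*(ω^4-1) + (b1:ℂ)*ω^2)) * hω4
  have eYc : (starRingEnd ℂ) y = (1-ω^3)^2 * (-(a2:ℂ)*ω - b2*ω^2 - c2*ω^3 + d2) + 1 := by
    rw [eY]
    simp only [map_mul, map_pow, map_add, map_one, map_intCast, map_neg, hconj]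
    linear_combination ((1-ω^3)^2 * (-(a2:ℂ)*ω*(ω^4-1) + (b2:ℂ)*ω^2)) * hω4
  have eZc : (starRingEnd ℂ) z = (1-ω^3)^2 * (-(a3:ℂ)*ω - b3*ω^2 - c3*ω^3 + d3) + (1-ω^3) := by
    rw [eZ]
    simp only [map_mul, map_pow, map_add, map_one, map_intCast, map_neg, hconj]
    linear_combination ((1-ω^3)^2 * (-(a3:ℂ)*ω*(ω^4-1) + (b3:ℂ)*ω^2)) * hω4
  have eWc : (starRingEnd ℂ) w = (1-ω^3)^2 * (-(a4:ℂ)*ω - b4*ω^2 - c4*ω^3 + d4) + (1-ω^3) + 1 := by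
    rw [eW]
    simp only [map_mul, map_pow, map_add, map_one, map_intCast, map_neg, hconj]
    linear_combination ((1-ω^3)^2 * (-(a4:ℂ)*ω*(ω^4-1) + (b4:ℂ)*ω^2)) * hω4
  refine ⟨((((-1) + (-3)*a1*b1 + (3)*a1*d1 + (-2)*a1^2 + a2 + (-3)*a2*b2 + (3)*a2*d2 + (-2)*a2^2 + (2)*a3 + (-3)*a3*b3 + (3)*a3*d3 + (-2)*a3^2 + (3)*a4 + (-3)*a4*b4 + (3)*a4*d4 + (-2)*a4^2 + (-3)*b1*c1 + (-2)*b1^2 + b2 + (-3)*b2*c2 + (-2)*b2^2 + b3 + (-3)*b3*c3 + (-2)*b3^2 + (2)*b4 + (-3)*b4*c4 + (-2)*b4^2 + (-3)*c1*d1 + (-2)*c1^2 + (-3)*c2*d2 + (-2)*c2^2 + (-1)*c3 + (-3)*c3*d3 + (-2)*c3^2 + (-1)*c4 + (-3)*c4*d4 + (-2)*c4^2 + (-2)*d1^2 + (-1)*d2 + (-2)*d2^2 + (-2)*d3 + (-2)*d3^2 + (-3)*d4 + (-2)*d4^2) : ℤ) : ℂ) * ω^3 + (((0:ℤ) : ℤ)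 : ℂ) * ω^2 + ((((1) + (3)*a1*b1 + (-3)*a1*d1 + (2)*a1^2 + (-1)*a2 + (3)*a2*b2 + (-3)*a2*d2 + (2)*a2^2 + (-2)*a3 + (3)*a3*b3 + (-3)*a3*d3 + (2)*a3^2 + (-3)*a4 + (3)*a4*b4 + (-3)*a4*d4 + (2)*a4^2 + (3)*b1*c1 + (2)*b1^2 + (-1)*b2 + (3)*b2*c2 + (2)*b2^2 + (-1)*b3 + (3)*b3*c3 + (2)*b3^2 + (-2)*b4 + (3)*b4*c4 + (2)*b4^2 + (3)*c1*d1 + (2)*c1^2 + (3)*c2*d2 + (2)*c2^2 + c3 + (3)*c3*d3 + (2)*c3^2 + c4 + (3)*c4*d4 + (2)*c4^2 + (2)*d1^2 + d2 + (2)*d2^2 + (2)*d3 + (2)*d3^2 + (3)*d4 + (2)*d4^2) : ℤ) : ℂ) * ω + ((((4) + (4)*a1*b1 + (-4)*a1*d1 + (3)*a1^2 + (-2)*a2 + (4)*a2*b2 + (-4)*a2*d2 + (3)*a2^2 + (-3)*a3 + (4)*a3*b3 + (-4)*a3*d3 + (3)*a3^2 + (-5)*a4 + (4)*a4*b4 +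 (-4)*a4*d4 + (3)*a4^2 + (4)*b1*c1 + (3)*b1^2 + (-1)*b2 + (4)*b2*c2 + (3)*b2^2 + (-1)*b3 + (4)*b3*c3 + (3)*b3^2 + (-2)*b4 + (4)*b4*c4 + (3)*b4^2 + (4)*c1*d1 + (3)*c1^2 + (4)*c2*d2 + (3)*c2^2 + c3 + (4)*c3*d3 + (3)*c3^2 + c4 + (4)*c4*d4 + (3)*c4^2 + (3)*d1^2 + d2 + (3)*d2^2 + (3)*d3 + (3)*d3^2 + (4)*d4 + (3)*d4^2) : ℤ) : ℂ),
    ⟨_, _, _, _, rfl⟩, ?_⟩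
  rw [eXc, eX, eYc, eY, eZc, eZ, eWc, eW]
  push_cast
  linear_combination (((-2) + (-8)*(a1:ℂ)*(b1:ℂ) + (8)*(a1:ℂ)*(d1:ℂ) + (-6)*(a1:ℂ)^2 + (4)*(a2:ℂ) + (-8)*(a2:ℂ)*(b2:ℂ) + (8)*(a2:ℂ)*(d2:ℂ) + (-6)*(a2:ℂ)^2 + (6)*(a3:ℂ) + (-8)*(a3:ℂ)*(b3:ℂ) + (8)*(a3:ℂ)*(d3:ℂ) + (-6)*(a3:ℂ)^2 + (10)*(a4:ℂ) + (-8)*(a4:ℂ)*(b4:ℂ) + (8)*(a4:ℂ)*(d4:ℂ) + (-6)*(a4:ℂ)^2 + (-8)*(b1:ℂ)*(c1:ℂ) + (-6)*(b1:ℂ)^2 + (2)*(b2:ℂ) + (-8)*(b2:ℂ)*(c2:ℂ) + (-6)*(b2:ℂ)^2 + (2)*(b3:ℂ) + (-8)*(b3:ℂ)*(c3:ℂ) + (-6)*(b3:ℂ)^2 + (4)*(b4:ℂ) + (-8)*(b4:ℂ)*(c4:ℂ) + (-6)*(b4:ℂ)^2 + (-8)*(c1:ℂ)*(d1:ℂ)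 + (-6)*(c1:ℂ)^2 + (-8)*(c2:ℂ)*(d2:ℂ) + (-6)*(c2:ℂ)^2 + (-2)*(c3:ℂ) + (-8)*(c3:ℂ)*(d3:ℂ) + (-6)*(c3:ℂ)^2 + (-2)*(c4:ℂ) + (-8)*(c4:ℂ)*(d4:ℂ) + (-6)*(c4:ℂ)^2 + (-5)*(d1:ℂ)^2 + (-5)*(d2:ℂ)^2 + (-4)*(d3:ℂ) + (-5)*(d3:ℂ)^2 + (-4)*(d4:ℂ) + (-5)*(d4:ℂ)^2) + ((-6)*(a1:ℂ)*(b1:ℂ) + (5)*(a1:ℂ)*(d1:ℂ) + (-4)*(a1:ℂ)^2 + (a2:ℂ) + (-6)*(a2:ℂ)*(b2:ℂ) + (5)*(a2:ℂ)*(d2:ℂ) + (-4)*(a2:ℂ)^2 + (3)*(a3:ℂ) + (-6)*(a3:ℂ)*(b3:ℂ) + (5)*(a3:ℂ)*(d3:ℂ) + (-4)*(a3:ℂ)^2 + (4)*(a4:ℂ) + (-6)*(a4:ℂ)*(b4:ℂ) + (5)*(a4:ℂ)*(d4:ℂ) + (-4)*(a4:ℂ)^2 + (-6)*(b1:ℂ)*(c1:ℂ)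 + (-4)*(b1:ℂ)^2 + (2)*(b2:ℂ) + (-6)*(b2:ℂ)*(c2:ℂ) + (-4)*(b2:ℂ)^2 + (2)*(b3:ℂ) + (-6)*(b3:ℂ)*(c3:ℂ) + (-4)*(b3:ℂ)^2 + (4)*(b4:ℂ) + (-6)*(b4:ℂ)*(c4:ℂ) + (-4)*(b4:ℂ)^2 + (-5)*(c1:ℂ)*(d1:ℂ) + (-4)*(c1:ℂ)^2 + (c2:ℂ) + (-5)*(c2:ℂ)*(d2:ℂ) + (-4)*(c2:ℂ)^2 + (-1)*(c3:ℂ) + (-5)*(c3:ℂ)*(d3:ℂ) + (-4)*(c3:ℂ)^2 + (-5)*(c4:ℂ)*(d4:ℂ) + (-4)*(c4:ℂ)^2 + (-2)*(d1:ℂ)^2 + (-2)*(d2:ℂ)^2 + (-1)*(d3:ℂ) + (-2)*(d3:ℂ)^2 + (-1)*(d4:ℂ) + (-2)*(d4:ℂ)^2)*ω^1 + ((-1)*(a1:ℂ)*(c1:ℂ) + (-2)*(a1:ℂ)*(d1:ℂ) + (-1)*(a2:ℂ)*(c2:ℂ) + (-2)*(a2:ℂ)*(d2:ℂ) + (-1)*(a3:ℂ)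 + (-1)*(a3:ℂ)*(c3:ℂ) + (-2)*(a3:ℂ)*(d3:ℂ) + (-1)*(a4:ℂ) + (-1)*(a4:ℂ)*(c4:ℂ) + (-2)*(a4:ℂ)*(d4:ℂ) + (2)*(c1:ℂ)*(d1:ℂ) + (2)*(c2:ℂ) + (2)*(c2:ℂ)*(d2:ℂ) + (2)*(c3:ℂ) + (2)*(c3:ℂ)*(d3:ℂ) + (4)*(c4:ℂ) + (2)*(c4:ℂ)*(d4:ℂ) + (d1:ℂ)^2 + (d2:ℂ) + (d2:ℂ)^2 + (d3:ℂ) + (d3:ℂ)^2 + (2)*(d4:ℂ) + (d4:ℂ)^2)*ω^2 + ((5)*(a1:ℂ)*(b1:ℂ) + (-2)*(a1:ℂ)*(c1:ℂ) + (-6)*(a1:ℂ)*(d1:ℂ) + (4)*(a1:ℂ)^2 + (-1)*(a2:ℂ) + (5)*(a2:ℂ)*(b2:ℂ) + (-2)*(a2:ℂ)*(c2:ℂ) + (-6)*(a2:ℂ)*(d2:ℂ) + (4)*(a2:ℂ)^2 + (-3)*(a3:ℂ) + (5)*(a3:ℂ)*(b3:ℂ) + (-2)*(a3:ℂ)*(c3:ℂ)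 + (-6)*(a3:ℂ)*(d3:ℂ) + (4)*(a3:ℂ)^2 + (-4)*(a4:ℂ) + (5)*(a4:ℂ)*(b4:ℂ) + (-2)*(a4:ℂ)*(c4:ℂ) + (-6)*(a4:ℂ)*(d4:ℂ) + (4)*(a4:ℂ)^2 + (5)*(b1:ℂ)*(c1:ℂ) + (4)*(b1:ℂ)^2 + (5)*(b2:ℂ)*(c2:ℂ) + (4)*(b2:ℂ)^2 + (-1)*(b3:ℂ) + (5)*(b3:ℂ)*(c3:ℂ) + (4)*(b3:ℂ)^2 + (-1)*(b4:ℂ) + (5)*(b4:ℂ)*(c4:ℂ) + (4)*(b4:ℂ)^2 + (6)*(c1:ℂ)*(d1:ℂ) + (4)*(c1:ℂ)^2 + (6)*(c2:ℂ)*(d2:ℂ) + (4)*(c2:ℂ)^2 + (2)*(c3:ℂ) + (6)*(c3:ℂ)*(d3:ℂ) + (4)*(c3:ℂ)^2 + (2)*(c4:ℂ) + (6)*(c4:ℂ)*(d4:ℂ) + (4)*(c4:ℂ)^2 + (2)*(d1:ℂ)^2 + (2)*(d2:ℂ)^2 + (d3:ℂ) + (2)*(d3:ℂ)^2 + (d4:ℂ)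 + (2)*(d4:ℂ)^2)*ω^3 + ((6)*(a1:ℂ)*(b1:ℂ) + (-1)*(a1:ℂ)*(c1:ℂ) + (-4)*(a1:ℂ)*(d1:ℂ) + (5)*(a1:ℂ)^2 + (6)*(a2:ℂ)*(b2:ℂ) + (-1)*(a2:ℂ)*(c2:ℂ) + (-4)*(a2:ℂ)*(d2:ℂ) + (5)*(a2:ℂ)^2 + (-2)*(a3:ℂ) + (6)*(a3:ℂ)*(b3:ℂ) + (-1)*(a3:ℂ)*(c3:ℂ) + (-4)*(a3:ℂ)*(d3:ℂ) + (5)*(a3:ℂ)^2 + (-2)*(a4:ℂ) + (6)*(a4:ℂ)*(b4:ℂ) + (-1)*(a4:ℂ)*(c4:ℂ) + (-4)*(a4:ℂ)*(d4:ℂ) + (5)*(a4:ℂ)^2 + (6)*(b1:ℂ)*(c1:ℂ) + (5)*(b1:ℂ)^2 + (-1)*(b2:ℂ) + (6)*(b2:ℂ)*(c2:ℂ) + (5)*(b2:ℂ)^2 + (-1)*(b3:ℂ) + (6)*(b3:ℂ)*(c3:ℂ) + (5)*(b3:ℂ)^2 + (-2)*(b4:ℂ) + (6)*(b4:ℂ)*(c4:ℂ)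 + (5)*(b4:ℂ)^2 + (4)*(c1:ℂ)*(d1:ℂ) + (5)*(c1:ℂ)^2 + (4)*(c2:ℂ)*(d2:ℂ) + (5)*(c2:ℂ)^2 + (4)*(c3:ℂ)*(d3:ℂ) + (5)*(c3:ℂ)^2 + (4)*(c4:ℂ)*(d4:ℂ) + (5)*(c4:ℂ)^2 + (d1:ℂ)^2 + (d2:ℂ)^2 + (d3:ℂ)^2 + (d4:ℂ)^2)*ω^4 + ((4)*(a1:ℂ)*(b1:ℂ) + (2)*(a1:ℂ)*(c1:ℂ) + (2)*(a1:ℂ)^2 + (4)*(a2:ℂ)*(b2:ℂ) + (2)*(a2:ℂ)*(c2:ℂ) + (2)*(a2:ℂ)^2 + (4)*(a3:ℂ)*(b3:ℂ) + (2)*(a3:ℂ)*(c3:ℂ) + (2)*(a3:ℂ)^2 + (4)*(a4:ℂ)*(b4:ℂ) + (2)*(a4:ℂ)*(c4:ℂ) + (2)*(a4:ℂ)^2 + (4)*(b1:ℂ)*(c1:ℂ) + (2)*(b1:ℂ)^2 + (4)*(b2:ℂ)*(c2:ℂ) + (2)*(b2:ℂ)^2 + (-1)*(b3:ℂ) + (4)*(b3:ℂ)*(c3:ℂ)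 + (2)*(b3:ℂ)^2 + (-1)*(b4:ℂ) + (4)*(b4:ℂ)*(c4:ℂ) + (2)*(b4:ℂ)^2 + (2)*(c1:ℂ)^2 + (-1)*(c2:ℂ) + (2)*(c2:ℂ)^2 + (-1)*(c3:ℂ) + (2)*(c3:ℂ)^2 + (-2)*(c4:ℂ) + (2)*(c4:ℂ)^2)*ω^5 + ((4)*(a1:ℂ)*(c1:ℂ) + (2)*(a1:ℂ)*(d1:ℂ) + (-1)*(a1:ℂ)^2 + (4)*(a2:ℂ)*(c2:ℂ) + (2)*(a2:ℂ)*(d2:ℂ) + (-1)*(a2:ℂ)^2 + (4)*(a3:ℂ)*(c3:ℂ) + (2)*(a3:ℂ)*(d3:ℂ) + (-1)*(a3:ℂ)^2 + (4)*(a4:ℂ)*(c4:ℂ) + (2)*(a4:ℂ)*(d4:ℂ) + (-1)*(a4:ℂ)^2 + (-1)*(b1:ℂ)^2 + (-1)*(b2:ℂ)^2 + (-1)*(b3:ℂ)^2 + (-1)*(b4:ℂ)^2 + (-2)*(c1:ℂ)*(d1:ℂ) + (-1)*(c1:ℂ)^2 + (-2)*(c2:ℂ)*(d2:ℂ) + (-1)*(c2:ℂ)^2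 + (-1)*(c3:ℂ) + (-2)*(c3:ℂ)*(d3:ℂ) + (-1)*(c3:ℂ)^2 + (-1)*(c4:ℂ) + (-2)*(c4:ℂ)*(d4:ℂ) + (-1)*(c4:ℂ)^2)*ω^6 + ((-2)*(a1:ℂ)*(b1:ℂ) + (2)*(a1:ℂ)*(c1:ℂ) + (a1:ℂ)*(d1:ℂ) + (-2)*(a1:ℂ)^2 + (-2)*(a2:ℂ)*(b2:ℂ) + (2)*(a2:ℂ)*(c2:ℂ) + (a2:ℂ)*(d2:ℂ) + (-2)*(a2:ℂ)^2 + (-2)*(a3:ℂ)*(b3:ℂ) + (2)*(a3:ℂ)*(c3:ℂ) + (a3:ℂ)*(d3:ℂ) + (-2)*(a3:ℂ)^2 + (-2)*(a4:ℂ)*(b4:ℂ) + (2)*(a4:ℂ)*(c4:ℂ) + (a4:ℂ)*(d4:ℂ) + (-2)*(a4:ℂ)^2 + (-2)*(b1:ℂ)*(c1:ℂ) + (-2)*(b1:ℂ)^2 + (-2)*(b2:ℂ)*(c2:ℂ) + (-2)*(b2:ℂ)^2 + (-2)*(b3:ℂ)*(c3:ℂ) + (-2)*(b3:ℂ)^2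 + (-2)*(b4:ℂ)*(c4:ℂ) + (-2)*(b4:ℂ)^2 + (-1)*(c1:ℂ)*(d1:ℂ) + (-2)*(c1:ℂ)^2 + (-1)*(c2:ℂ)*(d2:ℂ) + (-2)*(c2:ℂ)^2 + (-1)*(c3:ℂ)*(d3:ℂ) + (-2)*(c3:ℂ)^2 + (-1)*(c4:ℂ)*(d4:ℂ) + (-2)*(c4:ℂ)^2)*ω^7 + ((-2)*(a1:ℂ)*(b1:ℂ) + (-1)*(a1:ℂ)*(c1:ℂ) + (-1)*(a1:ℂ)^2 + (-2)*(a2:ℂ)*(b2:ℂ) + (-1)*(a2:ℂ)*(c2:ℂ) + (-1)*(a2:ℂ)^2 + (-2)*(a3:ℂ)*(b3:ℂ) + (-1)*(a3:ℂ)*(c3:ℂ) + (-1)*(a3:ℂ)^2 + (-2)*(a4:ℂ)*(b4:ℂ) + (-1)*(a4:ℂ)*(c4:ℂ) + (-1)*(a4:ℂ)^2 + (-2)*(b1:ℂ)*(c1:ℂ) + (-1)*(b1:ℂ)^2 + (-2)*(b2:ℂ)*(c2:ℂ) + (-1)*(b2:ℂ)^2 + (-2)*(b3:ℂ)*(c3:ℂ)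 + (-1)*(b3:ℂ)^2 + (-2)*(b4:ℂ)*(c4:ℂ) + (-1)*(b4:ℂ)^2 + (-1)*(c1:ℂ)^2 + (-1)*(c2:ℂ)^2 + (-1)*(c3:ℂ)^2 + (-1)*(c4:ℂ)^2)*ω^8 + ((-1)*(a1:ℂ)*(b1:ℂ) + (-2)*(a1:ℂ)*(c1:ℂ) + (-1)*(a2:ℂ)*(b2:ℂ) + (-2)*(a2:ℂ)*(c2:ℂ) + (-1)*(a3:ℂ)*(b3:ℂ) + (-2)*(a3:ℂ)*(c3:ℂ) + (-1)*(a4:ℂ)*(b4:ℂ) + (-2)*(a4:ℂ)*(c4:ℂ) + (-1)*(b1:ℂ)*(c1:ℂ) + (-1)*(b2:ℂ)*(c2:ℂ) + (-1)*(b3:ℂ)*(c3:ℂ) + (-1)*(b4:ℂ)*(c4:ℂ))*ω^9 + ((-1)*(a1:ℂ)*(c1:ℂ) + (-1)*(a2:ℂ)*(c2:ℂ) + (-1)*(a3:ℂ)*(c3:ℂ) + (-1)*(a4:ℂ)*(c4:ℂ))*ω^10) * hω4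
end
end
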